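/- Let K be a field of characteristic 2 and n ≥ 2. Every range-compatible group homomorphism F : Sym_n(K) → K^n is the sum of a local map and a map of the form M ↦ (α(m_{1,1}), …, α(m_{n,n})) for some root-linear form α on K; that is, there exist X ∈ K^n and an additive map α : K → K with α(λ²x) = λα(x) such that F(M) = MX + (α(m_{1,1}), …, α(m_{n,n})) for all symmetric M. -/

import Mathlib

/-!
Write `Sᵢⱼ(c) = symmSingle i j c = c (Eᵢⱼ + Eⱼᵢ)`. The key instances of range compatibility are the
rank-one matrices `c vvᵀ`, where it says that `F (c vvᵀ)` is a multiple of `v`.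
For `v = eᵢ + q eⱼ` this reads
`q (F(c Eᵢᵢ)ᵢ + F(Sᵢⱼ(cq))ᵢ) = F(Sᵢⱼ(cq))ⱼ + F(cq² Eⱼⱼ)ⱼ`.
At `c = 1`, since `q ↦ q²` is additive in characteristic 2, this makes `q ↦ q F(Sᵢⱼ(q))ᵢ` additive,
which forces `F(Sᵢⱼ(q))ᵢ = q F(Sᵢⱼ(1))ᵢ`. Feeding linearity back, the relation says that
`c ↦ F(c Eᵢᵢ)ᵢ + c F(Sᵢⱼ(1))ⱼ` is root-linear and does not depend on `i`, while `v = eᵢ + eⱼ + eₖ`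
shows that `F(Sᵢⱼ(1))ⱼ` does not depend on `j`. Both sides of the claimed identity are additive on
symmetric matrices and agree on the `c Eᵢᵢ` and `Sᵢⱼ(c)`, which span them.
-/

namespace Matrix

variable {n α : Type*}

theorem isSymm_vecMulVec_self [CommMagma α] (v : n → α) : (vecMulVec v v).IsSymm :=
  transpose_vecMulVec v v

variable [DecidableEq n]

def symmSingle [AddCommMonoid α] (i j : n) (c : α) : Matrix n n α := single i j c + single j i c

section AddCommMonoid

variable [AddCommMonoid α]

theorem isSymm_single_self (i : n) (c : α) : (single i i c).IsSymm := by
  simp [IsSymm, transpose_single]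

theorem isSymm_symmSingle (i j : n) (c : α) : (symmSingle i j c).IsSymm := by
  simp [IsSymm, symmSingle, transpose_single, add_comm]

theorem symmSingle_comm (i j : n) (c : α) : symmSingle i j c = symmSingle j i c :=
  add_comm _ _

theorem symmSingle_add (i j : n) (a b : α) :
    symmSingle i j (a + b) = symmSingle i j a + symmSingle i j b := by
  simp only [symmSingle, single_add]
  abel

@[elab_as_elim]
theorem IsSymm.induction_on [Fintype n] [LinearOrder n] {P : Matrix n n α → Prop}
    {M : Matrix n n α} (hM : M.IsSymm) (h_zero : P 0)
    (h_add : ∀ A B, A.IsSymm → B.IsSymm → P A → P B → P (A + B))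
    (h_diag : ∀ i c, P (single i i c)) (h_off : ∀ i j, i ≠ j → ∀ c, P (symmSingle i j c)) :
    P M := by
  set U : Matrix n n α := of fun i j => if i < j then M i j else 0
  have h_decomp : M = (U + Uᵀ) + diagonal M.diag := by
    ext i j
    rcases lt_trichotomy i j with h | rfl | h
    · simp [U, h, h.not_gt, h.ne]
    · simp [U]
    · simp [U, h, h.not_gt, h.ne', hM.apply i j]
  have h_add_transpose (A : Matrix n n α) : P (A + Aᵀ) := by
    induction A using Matrix.induction_on' with
    | h_zero => simpa using h_zero
    | h_add A B hA hB =>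
      rw [transpose_add, add_add_add_comm]
      exact h_add _ _ (isSymm_add_transpose_self A) (isSymm_add_transpose_self B) hA hB
    | h_std_basis i j c =>
      rw [transpose_single]
      obtain rfl | hij := eq_or_ne i j
      · rw [← single_add]
        exact h_diag i _
      · exact h_off i j hij c
  have h_diagonal (d : n → α) : (diagonal d).IsSymm ∧ P (diagonal d) := by
    rw [← sum_single_eq_diagonal]
    exact Finset.sum_induction _ (fun A => A.IsSymm ∧ P A)
      (fun A B hA hB => ⟨hA.1.add hB.1, h_add A B hA.1 hB.1 hA.2 hB.2⟩)
      ⟨isSymm_zero, h_zero⟩ (fun i _ => ⟨isSymm_single_self i _, h_diag i _⟩)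
  rw [h_decomp]
  exact h_add _ _ (isSymm_add_transpose_self U) (h_diagonal _).1 (h_add_transpose U)
    (h_diagonal _).2

end AddCommMonoid

section CommSemiring

variable [CommSemiring α]

theorem symmSingle_mulVec [Fintype n] (i j : n) (c : α) (w : n → α) :
    symmSingle i j c *ᵥ w = Pi.single i (c * w j) + Pi.single j (c * w i) := by
  simp [symmSingle, add_mulVec, single_mulVec, Pi.single]

theorem vecMulVec_single_single (i j : n) (a b : α) :
    vecMulVec (Pi.single i a) (Pi.single j b) = single i j (a * b) := by
  ext k l
  obtain rfl | hk := eq_or_ne k i <;> obtain rfl | hl := eq_or_ne l j <;>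
    simp [vecMulVec_apply, *, Ne.symm]

theorem smul_vecMulVec_single_add_single (i j : n) (c q : α) :
    c • vecMulVec (Pi.single i 1 + Pi.single j q) (Pi.single i 1 + Pi.single j q) =
      single i i c + symmSingle i j (c * q) + single j j (c * q ^ 2) := by
  simp only [add_vecMulVec, vecMulVec_add, vecMulVec_single_single, smul_add, smul_single,
    smul_eq_mul, symmSingle, one_mul, ← sq, one_pow, mul_one]
  abel

theorem vecMulVec_single_add_single_add_single (i j k : n) :
    vecMulVec (Pi.single i 1 + (Pi.single j 1 + Pi.single k 1) : n → α)
        (Pi.single i 1 + (Pi.single j 1 + Pi.single k 1)) =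
      vecMulVec (Pi.single j 1 + Pi.single k 1) (Pi.single j 1 + Pi.single k 1) +
        single i i 1 + symmSingle i j 1 + symmSingle i k 1 := by
  simp only [add_vecMulVec, vecMulVec_add, vecMulVec_single_single, symmSingle, mul_one]
  abel

end CommSemiring

end Matrix

open Matrix

theorem CharTwo.apply_eq_mul_apply_one {R : Type*} [CommRing R] [CharP R 2] {b : R → R}
    (hb : ∀ x y, b (x + y) = b x + b y)
    (hmul : ∀ x y, (x + y) * b (x + y) = x * b x + y * b y) (q : R) : b q = q * b 1 := by
  have h := hmul q 1
  rw [hb] at h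
  linear_combination h - q * b 1 * CharTwo.two_eq_zero (R := R)

structure IsRangeCompatibleOnSymm {ι K : Type*} [Fintype ι] [CommRing K]
    (F : Matrix ι ι K → ι → K) : Prop where
  map_add : ∀ M N : Matrix ι ι K, M.IsSymm → N.IsSymm → F (M + N) = F M + F N
  mem_range : ∀ M : Matrix ι ι K, M.IsSymm → F M ∈ Set.range M.mulVec

namespace IsRangeCompatibleOnSymm

variable {ι K : Type*} [Fintype ι] [CommRing K] {F : Matrix ι ι K → ι → K}

theorem map_zero (hF : IsRangeCompatibleOnSymm F) : F 0 = 0 := by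
  have h := hF.map_add 0 0 isSymm_zero isSymm_zero
  rwa [add_zero, left_eq_add] at h

theorem mul_apply_smul_vecMulVec (hF : IsRangeCompatibleOnSymm F) (c : K) (v : ι → K)
    (i j : ι) : v i * F (c • vecMulVec v v) j = v j * F (c • vecMulVec v v) i := by
  obtain ⟨w, hw⟩ := hF.mem_range _ ((isSymm_vecMulVec_self v).smul c)
  simp only [← hw, smul_mulVec, vecMulVec_mulVec, op_smul_eq_smul, Pi.smul_apply, smul_eq_mul]
  ring

variable [DecidableEq ι]

theorem map_single_add (hF : IsRangeCompatibleOnSymm F) (i : ι) (a b : K) :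
    F (single i i (a + b)) = F (single i i a) + F (single i i b) := by
  rw [single_add, hF.map_add _ _ (isSymm_single_self i a) (isSymm_single_self i b)]

theorem map_symmSingle_add (hF : IsRangeCompatibleOnSymm F) (i j : ι) (a b : K) :
    F (symmSingle i j (a + b)) = F (symmSingle i j a) + F (symmSingle i j b) := by
  rw [symmSingle_add, hF.map_add _ _ (isSymm_symmSingle i j a) (isSymm_symmSingle i j b)]

theorem apply_single_of_ne (hF : IsRangeCompatibleOnSymm F) {i k : ι} (hki : k ≠ i) (c : K) :
    F (single i i c) k = 0 := by
  obtain ⟨w, hw⟩ := hF.mem_range _ (isSymm_single_self i c)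
  simp [← hw, single_mulVec, hki]

theorem apply_symmSingle_of_ne (hF : IsRangeCompatibleOnSymm F) {i j k : ι} (hki : k ≠ i)
    (hkj : k ≠ j) (c : K) : F (symmSingle i j c) k = 0 := by
  obtain ⟨w, hw⟩ := hF.mem_range _ (isSymm_symmSingle i j c)
  simp [← hw, symmSingle_mulVec, hki, hkj]

/-- Range compatibility at the rank-one matrix `c vvᵀ`, `v = eᵢ + q eⱼ`. -/
theorem mul_apply_single_add_apply_symmSingle (hF : IsRangeCompatibleOnSymm F) {i j : ι}
    (hij : i ≠ j) (c q : K) :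
    q * (F (single i i c) i + F (symmSingle i j (c * q)) i) =
      F (symmSingle i j (c * q)) j + F (single j j (c * q ^ 2)) j := by
  have h := hF.mul_apply_smul_vecMulVec c (Pi.single i 1 + Pi.single j q) i j
  rw [smul_vecMulVec_single_add_single,
    hF.map_add _ _ ((isSymm_single_self i c).add (isSymm_symmSingle i j _))
      (isSymm_single_self j _),
    hF.map_add _ _ (isSymm_single_self i c) (isSymm_symmSingle i j _)] at h
  simp [hij, hij.symm, hF.apply_single_of_ne hij, hF.apply_single_of_ne hij.symm] at h
  linear_combination -h

/-- Range compatibility at `vvᵀ` for `v = eᵢ + eⱼ + eₖ` and for `v = eⱼ + eₖ`. -/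
theorem apply_symmSingle_one_eq (hF : IsRangeCompatibleOnSymm F) {i j k : ι} (hij : i ≠ j)
    (hik : i ≠ k) (hjk : j ≠ k) : F (symmSingle i j 1) j = F (symmSingle i k 1) k := by
  set v : ι → K := Pi.single j 1 + Pi.single k 1
  have hv := hF.mul_apply_smul_vecMulVec 1 v j k
  have hw := hF.mul_apply_smul_vecMulVec 1 (Pi.single i 1 + v) j k
  rw [one_smul, vecMulVec_single_add_single_add_single,
    hF.map_add _ _ (((isSymm_vecMulVec_self v).add (isSymm_single_self i 1)).add
      (isSymm_symmSingle i j 1)) (isSymm_symmSingle i k 1),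
    hF.map_add _ _ ((isSymm_vecMulVec_self v).add (isSymm_single_self i 1))
      (isSymm_symmSingle i j 1),
    hF.map_add _ _ (isSymm_vecMulVec_self v) (isSymm_single_self i 1)] at hw
  simp [v, hjk, hij.symm, hik.symm, hjk.symm, hF.apply_single_of_ne,
    hF.apply_symmSingle_of_ne] at hv hw
  linear_combination hv - hw

theorem eq_mulVec_add_of_apply_single [LinearOrder ι] (hF : IsRangeCompatibleOnSymm F)
    {X : ι → K} {α : K → K} (hα : ∀ x y, α (x + y) = α x + α y)
    (h_diag : ∀ i c, F (single i i c) i = c * X i + α c)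
    (h_off : ∀ i j, i ≠ j → ∀ c, F (symmSingle i j c) j = c * X i)
    {M : Matrix ι ι K} (hM : M.IsSymm) : F M = M *ᵥ X + fun i => α (M i i) := by
  have hα₀ : α 0 = 0 := by simpa using hα 0 0
  refine hM.induction_on ?zero ?add ?diag ?off
  case zero =>
    ext i
    simp [hF.map_zero, hα₀]
  case add =>
    intro A B hA hB hFA hFB
    ext i
    simp only [hF.map_add A B hA hB, hFA, hFB, add_mulVec, Pi.add_apply, Matrix.add_apply, hα]
    ring
  case diag =>
    intro i c
    ext k
    obtain rfl | hki := eq_or_ne k i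
    · simp [h_diag, single_mulVec]
    · simp [hF.apply_single_of_ne hki, single_mulVec, hki, single_apply_of_row_ne hki.symm, hα₀]
  case off =>
    intro i j hij c
    ext k
    have h_diag_zero : symmSingle i j c k k = 0 := by
      obtain rfl | hki := eq_or_ne k i <;> simp [symmSingle, *, Ne.symm]
    rw [Pi.add_apply, h_diag_zero, hα₀, add_zero, symmSingle_mulVec]
    obtain rfl | hki := eq_or_ne k i
    · rw [symmSingle_comm, h_off j k hij.symm]
      simp [hij]
    obtain rfl | hkj := eq_or_ne k j
    · simp [h_off i k hij, hki]
    · simp [hF.apply_symmSingle_of_ne hki hkj, hki, hkj]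

section CharTwo

variable [CharP K 2]

theorem apply_symmSingle_eq_mul (hF : IsRangeCompatibleOnSymm F) {i j : ι} (hij : i ≠ j)
    (c : K) : F (symmSingle i j c) i = c * F (symmSingle i j 1) i := by
  have h_rankOne (q : K) : q * F (symmSingle i j q) i =
      F (symmSingle i j q) j + F (single j j (q ^ 2)) j + q * F (single i i 1) i := by
    have h := hF.mul_apply_single_add_apply_symmSingle hij 1 q
    simp only [one_mul] at h
    linear_combination h - q * F (single i i 1) i * CharTwo.two_eq_zero (R := K)
  refine CharTwo.apply_eq_mul_apply_one (b := fun q => F (symmSingle i j q) i)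
    (fun x y => ?_) (fun x y => ?_) c
  · simp only [hF.map_symmSingle_add, Pi.add_apply]
  · rw [h_rankOne, h_rankOne, h_rankOne, hF.map_symmSingle_add, CharTwo.add_sq, hF.map_single_add]
    simp only [Pi.add_apply]
    ring

theorem apply_single_mul_sq (hF : IsRangeCompatibleOnSymm F) {i j : ι} (hij : i ≠ j)
    (c q : K) : F (single j j (c * q ^ 2)) j = q * F (single i i c) i +
      c * q ^ 2 * F (symmSingle i j 1) i + c * q * F (symmSingle i j 1) j := by
  have h := hF.mul_apply_single_add_apply_symmSingle hij c q
  rw [hF.apply_symmSingle_eq_mul hij, symmSingle_comm i j (c * q),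
    hF.apply_symmSingle_eq_mul hij.symm, ← symmSingle_comm i j 1] at h
  linear_combination -h - q * c * F (symmSingle i j 1) j * CharTwo.two_eq_zero (R := K)

theorem apply_single_eq_add (hF : IsRangeCompatibleOnSymm F) {i j : ι} (hij : i ≠ j) (c : K) :
    F (single j j c) j =
      F (single i i c) i + c * F (symmSingle i j 1) i + c * F (symmSingle i j 1) j := by
  simpa using hF.apply_single_mul_sq hij c 1

theorem apply_single_mul_sq_add_mul (hF : IsRangeCompatibleOnSymm F) {i j : ι} (hij : i ≠ j)
    (c q : K) : F (single i i (c * q ^ 2)) i + c * q ^ 2 * F (symmSingle i j 1) j =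
      q * (F (single i i c) i + c * F (symmSingle i j 1) j) := by
  linear_combination hF.apply_single_mul_sq hij c q - hF.apply_single_eq_add hij (c * q ^ 2)

theorem exists_eq_mulVec_add [LinearOrder ι] [Nontrivial ι] (hF : IsRangeCompatibleOnSymm F) :
    ∃ (X : ι → K) (α : K → K),
      (∀ x y : K, α (x + y) = α x + α y) ∧
      (∀ l x : K, α (l ^ 2 * x) = l * α x) ∧
      ∀ M : Matrix ι ι K, M.IsSymm → F M = M *ᵥ X + fun i => α (M i i) := by
  choose partner hpartner using fun i : ι => exists_ne i
  set X : ι → K := fun i => F (symmSingle i (partner i) 1) (partner i)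
  have hX {i j : ι} (hij : i ≠ j) : F (symmSingle i j 1) j = X i := by
    obtain rfl | hj := eq_or_ne j (partner i)
    · rfl
    · exact hF.apply_symmSingle_one_eq hij (hpartner i).symm hj
  obtain ⟨i₀⟩ : Nonempty ι := inferInstance
  set α : K → K := fun c => F (single i₀ i₀ c) i₀ + c * X i₀
  have hα (x y : K) : α (x + y) = α x + α y := by
    simp only [α, hF.map_single_add, Pi.add_apply]
    ring
  have h_diag (i : ι) (c : K) : F (single i i c) i = c * X i + α c := by
    obtain rfl | hi := eq_or_ne i i₀
    · linear_combination -c * X i * CharTwo.two_eq_zero (R := K)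
    · rw [hF.apply_single_eq_add hi.symm, hX hi.symm, symmSingle_comm, hX hi]
      ring
  have h_off (i j : ι) (hij : i ≠ j) (c : K) : F (symmSingle i j c) j = c * X i := by
    rw [symmSingle_comm, hF.apply_symmSingle_eq_mul hij.symm, symmSingle_comm, hX hij]
  refine ⟨X, α, hα, fun l x => ?_, fun M hM => hF.eq_mulVec_add_of_apply_single hα h_diag h_off hM⟩
  simp only [α, mul_comm (l ^ 2) x]
  exact hF.apply_single_mul_sq_add_mul (hpartner i₀).symm x l

end CharTwo

end IsRangeCompatibleOnSymm

theorem stmt_10 {K : Type*} [Field K] [CharP K 2] (n : ℕ) (hn : 2 ≤ n)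
    (F : Matrix (Fin n) (Fin n) K → (Fin n → K))
    (hadd : ∀ M N : Matrix (Fin n) (Fin n) K, M.IsSymm → N.IsSymm → F (M + N) = F M + F N)
    (hrc : ∀ M : Matrix (Fin n) (Fin n) K, M.IsSymm → F M ∈ Set.range M.mulVec) :
    ∃ (X : Fin n → K) (α : K → K),
      (∀ x y : K, α (x + y) = α x + α y) ∧
      (∀ l x : K, α (l ^ 2 * x) = l * α x) ∧
      ∀ M : Matrix (Fin n) (Fin n) K, M.IsSymm →
        F M = M.mulVec X + fun i => α (M i i) := by
  have : Nontrivial (Fin n) := Fin.nontrivial_iff_two_le.mpr hn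
  exact IsRangeCompatibleOnSymm.exists_eq_mulVec_add ⟨hadd, hrc⟩
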